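/- arXiv:2003.01671 — 2 statements merged into one kernel-verified Lean document; each statement's English description precedes it below -/
import Mathlib

section
/- (Well-posedness of the implicit Euler step.) Let (X, d) be a complete metric space and φ : X → (−∞, +∞] a proper lower semicontinuous function. Assume: (a) there exist h_* > 0 and x_* ∈ X with inf_{y ∈ X} [φ(y) + d(x_*, y)²/(2h_*)] > −∞; (b) every sequence (x_m) in X with sup_m φ(x_m) < +∞ and sup_{m,k} d(x_m, x_k) < +∞ admits a convergent subsequence. Then for every x ∈ X with φ(x) < +∞ and every h with 0 < h < h_*, the function y ↦ φ(y) + d(x, y)²/(2h) attains its infimum on X, i.e. it has at least one minimizer. -/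
/-!
By Young's inequality, the lower bound on `φ + d(x_*, ·)² / (2h_*)` turns into a coercive lower
bound `c + δ d(x, ·)²` with `δ > 0` on `φ + d(x, ·)² / (2h)` whenever `h < h_*`. A finite
sublevel set of this lower semicontinuous functional is therefore closed, bounded and has `φ`
bounded above, hence is sequentially compact by assumption (b), and the functional attains its
minimum on it.
-/

open Filter Set

theorem LowerSemicontinuous.exists_forall_le_of_isCompact_preimage_Iic
    {α β : Type*} [TopologicalSpace α] [LinearOrder β] {f : α → β}
    (hf : LowerSemicontinuous f) (x₀ : α) (hK : IsCompact (f ⁻¹' Iic (f x₀))) :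
    ∃ a, ∀ x, f a ≤ f x := by
  obtain ⟨a, -, ha⟩ := hf.lowerSemicontinuousOn _ |>.exists_isMinOn ⟨x₀, le_refl (f x₀)⟩ hK
  refine ⟨a, fun x => ?_⟩
  rcases le_total (f x) (f x₀) with hx | hx
  · exact ha hx
  · exact (ha (le_refl (f x₀))).trans hx

/-- Young's inequality `(a + d)² ≤ (1 + ε) d² + (1 + 1/ε) a²` with `ε = (H - h) / (2h)`. -/
theorem add_sq_div_le {h H : ℝ} (hh : 0 < h) (hhH : h < H) (a d : ℝ) :
    (a + d) ^ 2 / (2 * H) ≤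
      d ^ 2 / (2 * h) - (H - h) / (4 * h * H) * d ^ 2 + (H + h) / (H - h) * a ^ 2 / (2 * H) := by
  have hHh : 0 < H - h := by linarith
  have hH : 0 < H := by linarith
  have hsquare : d ^ 2 / (2 * h) - (H - h) / (4 * h * H) * d ^ 2
      + (H + h) / (H - h) * a ^ 2 / (2 * H) - (a + d) ^ 2 / (2 * H)
      = (2 * a * h - (H - h) * d) ^ 2 / (4 * h * H * (H - h)) := by
    field_simp
    ring
  have : 0 ≤ (2 * a * h - (H - h) * d) ^ 2 / (4 * h * H * (H - h)) := by positivity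
  linarith

section Moreau

variable {X : Type*} [PseudoMetricSpace X]

noncomputable def moreauFunctional (φ : X → EReal) (h : ℝ) (x y : X) : EReal :=
  φ y + ((dist x y ^ 2 / (2 * h) : ℝ) : EReal)

theorem le_moreauFunctional (φ : X → EReal) {h : ℝ} (hh : 0 ≤ h) (x y : X) :
    φ y ≤ moreauFunctional φ h x y :=
  le_add_of_nonneg_right (EReal.coe_nonneg.2 (by positivity))

theorem LowerSemicontinuous.moreauFunctional {φ : X → EReal} (hφ : LowerSemicontinuous φ)
    (h : ℝ) (x : X) : LowerSemicontinuous (moreauFunctional φ h x) := by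
  have hpen : Continuous fun y : X => ((dist x y ^ 2 / (2 * h) : ℝ) : EReal) :=
    continuous_coe_real_ereal.comp (by fun_prop)
  refine hφ.add' hpen.lowerSemicontinuous fun y => EReal.continuousAt_add ?_ ?_
  · exact Or.inr (EReal.coe_ne_bot _)
  · exact Or.inr (EReal.coe_ne_top _)

theorem exists_coercive_le_moreauFunctional {φ : X → EReal} {H h m : ℝ} {x₀ : X}
    (hm : ∀ y, (m : EReal) ≤ moreauFunctional φ H x₀ y) (hh : 0 < h) (hhH : h < H) (x : X) :
    ∃ c δ : ℝ, 0 < δ ∧ ∀ y, ((c + δ * dist x y ^ 2 : ℝ) : EReal) ≤ moreauFunctional φ h x y := by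
  set δ := (H - h) / (4 * h * H)
  set C := (H + h) / (H - h) * dist x₀ x ^ 2 / (2 * H)
  refine ⟨m - C, δ, div_pos (by linarith) (by nlinarith), fun y => ?_⟩
  have hpen : dist x₀ y ^ 2 / (2 * H) ≤ dist x y ^ 2 / (2 * h) + (C - δ * dist x y ^ 2) := by
    have htri : dist x₀ y ^ 2 ≤ (dist x₀ x + dist x y) ^ 2 :=
      pow_le_pow_left₀ dist_nonneg (dist_triangle _ _ _) 2
    have := add_sq_div_le hh hhH (dist x₀ x) (dist x y)
    have := div_le_div_of_nonneg_right htri (by linarith : (0 : ℝ) ≤ 2 * H)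
    linarith
  have hle : (m : EReal) ≤ moreauFunctional φ h x y + ((C - δ * dist x y ^ 2 : ℝ) : EReal) := by
    refine (hm y).trans ?_
    rw [moreauFunctional, moreauFunctional, add_assoc, ← EReal.coe_add]
    gcongr
  calc ((m - C + δ * dist x y ^ 2 : ℝ) : EReal)
      = (m : EReal) - ((C - δ * dist x y ^ 2 : ℝ) : EReal) := by
        rw [← EReal.coe_sub]; congr 1; ring
    _ ≤ moreauFunctional φ h x y := EReal.sub_le_of_le_add hle

theorem isBounded_moreauFunctional_preimage_Iic {φ : X → EReal} {H h m : ℝ} {x₀ : X}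
    (hm : ∀ y, (m : EReal) ≤ moreauFunctional φ H x₀ y) (hh : 0 < h) (hhH : h < H) (x : X)
    (r : ℝ) : Bornology.IsBounded (moreauFunctional φ h x ⁻¹' Iic (r : EReal)) := by
  obtain ⟨c, δ, hδ, hc⟩ := exists_coercive_le_moreauFunctional hm hh hhH x
  refine (Metric.isBounded_closedBall (x := x) (r := √((r - c) / δ))).subset fun y hy => ?_
  have hcr : c + δ * dist x y ^ 2 ≤ r := EReal.coe_le_coe_iff.1 ((hc y).trans hy)
  rw [Metric.mem_closedBall, dist_comm]
  exact Real.le_sqrt_of_sq_le (by rw [le_div_iff₀ hδ]; linarith)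

end Moreau

theorem implicit_euler_step_minimizer_exists_general
    {X : Type*} [MetricSpace X]
    (φ : X → EReal)
    (hlsc : LowerSemicontinuous φ)
    (hstar : ℝ) (xstar : X)
    (hbdd : ∃ m : ℝ, ∀ y : X, (m : EReal) ≤ φ y + ((dist xstar y ^ 2 / (2 * hstar) : ℝ) : EReal))
    (hcpt : ∀ x : ℕ → X, (∃ C : ℝ, ∀ m, φ (x m) ≤ (C : EReal)) →
      (∃ R : ℝ, ∀ m k, dist (x m) (x k) ≤ R) →
      ∃ ψ : ℕ → ℕ, StrictMono ψ ∧ ∃ z : X, Tendsto (x ∘ ψ) atTop (nhds z)) :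
    ∀ x : X, φ x ≠ ⊤ → ∀ h : ℝ, 0 < h → h < hstar →
      ∃ y : X, ∀ z : X,
        φ y + ((dist x y ^ 2 / (2 * h) : ℝ) : EReal) ≤
          φ z + ((dist x z ^ 2 / (2 * h) : ℝ) : EReal) := by
  intro x hx h hh hhs
  obtain ⟨m, hm⟩ := hbdd
  set F := moreauFunctional φ h x
  have hFlsc : LowerSemicontinuous F := hlsc.moreauFunctional h x
  have hFx : F x ≤ ((F x).toReal : EReal) :=
    EReal.le_coe_toReal (EReal.add_lt_top hx (EReal.coe_ne_top _)).ne
  obtain ⟨R, hR⟩ := Metric.isBounded_iff.1 <|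
    isBounded_moreauFunctional_preimage_Iic hm hh hhs x (F x).toReal
  have hK : IsCompact (F ⁻¹' Iic (F x)) := by
    refine IsSeqCompact.isCompact fun u hu => ?_
    have hu' : ∀ n, F (u n) ≤ (F x).toReal := fun n => (hu n).trans hFx
    obtain ⟨ψ, hψ, y, hy⟩ := hcpt u
      ⟨(F x).toReal, fun n => (le_moreauFunctional φ hh.le x (u n)).trans (hu' n)⟩
      ⟨R, fun n k => hR (hu' n) (hu' k)⟩
    exact ⟨y, (hFlsc.isClosed_preimage _).mem_of_tendsto hy (.of_forall fun n => hu (ψ n)),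
      ψ, hψ, hy⟩
  exact hFlsc.exists_forall_le_of_isCompact_preimage_Iic x hK

/-- Well-posedness of the implicit Euler step: under boundedness-below of one penalized
functional and a compactness assumption, each penalized functional with time step
`0 < h < h_*` attains its infimum. -/
theorem implicit_euler_step_minimizer_exists
    {X : Type*} [MetricSpace X] [CompleteSpace X]
    (φ : X → EReal) (hproper : ∃ x, φ x ≠ ⊤) (hbot : ∀ x, φ x ≠ ⊥)
    (hlsc : LowerSemicontinuous φ)
    (hstar : ℝ) (xstar : X) (hhstar : 0 < hstar)
    (hbdd : ∃ m : ℝ, ∀ y : X, (m : EReal) ≤ φ y + ((dist xstar y ^ 2 / (2 * hstar) : ℝ) : EReal))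
    (hcpt : ∀ x : ℕ → X, (∃ C : ℝ, ∀ m, φ (x m) ≤ (C : EReal)) →
      (∃ R : ℝ, ∀ m k, dist (x m) (x k) ≤ R) →
      ∃ ψ : ℕ → ℕ, StrictMono ψ ∧ ∃ z : X, Tendsto (x ∘ ψ) atTop (nhds z)) :
    ∀ x : X, φ x ≠ ⊤ → ∀ h : ℝ, 0 < h → h < hstar →
      ∃ y : X, ∀ z : X,
        φ y + ((dist x y ^ 2 / (2 * h) : ℝ) : EReal) ≤
          φ z + ((dist x z ^ 2 / (2 * h) : ℝ) : EReal) :=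
  implicit_euler_step_minimizer_exists_general φ hlsc hstar xstar hbdd hcpt
end

section
/- (Existence of generalized minimizing movements in complete metric spaces.) Let (X, d) be a complete metric space and φ : X → (−∞, +∞] a proper lower semicontinuous function. Assume: (a) there exist h_* > 0 and x_* ∈ X with inf_{y ∈ X} [φ(y) + d(x_*, y)²/(2h_*)] > −∞; (b) every sequence (x_m) in X with sup_m φ(x_m) < +∞ and sup_{m,k} d(x_m, x_k) < +∞ admits a convergent subsequence. Then for every u₀ ∈ X with φ(u₀) < +∞ there exist a sequence h_m → 0 of positive reals, for each m a sequence w_m : ℕ → X with w_m(0) = u₀ such that for every k ∈ ℕ, w_m(k+1) minimizes y ↦ φ(y) + d(w_m(k), y)²/(2h_m) over y ∈ X, and a continuous curve u : [0,∞) → X with u(0) = u₀, such that for every t ≥ 0 one has d(w_m(⌊t/h_m⌋), u(t)) → 0 as m → ∞. In particular, the set of generalized minimizing movements starting at u₀ is nonempty. -/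
/-!
Each step of the implicit Euler scheme exists by the direct method: with `h ≤ h_* / 4` the
penalty `d(x, y)² / (2h)` dominates the quadratic lower bound in (a), so sublevel sets of the
penalized functional are bounded, hence compact by (b). Along a discrete solution the energy
drops by at least `d(w_k, w_{k+1})² / (2h)` per step. A discrete Gronwall argument bounds
`d(x_*, w_k)` for `k h ≤ T`, and then Cauchy–Schwarz gives `d(w_k, w_l)² ≤ C_T (l - k) h`,
uniformly in `h`. The piecewise constant interpolants are therefore pointwise relatively compact
and equicontinuous up to an error `O(h)`; a diagonal extraction on the rational times, extended to
all times by this approximate equicontinuity, yields a continuous limit curve.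
-/

open Filter Topology Set Metric

lemma EReal.coe_le_add_coe_iff {a : EReal} {r c : ℝ} :
    (r : EReal) ≤ a + c ↔ ((r - c : ℝ) : EReal) ≤ a := by
  rw [EReal.coe_sub, EReal.sub_le_iff_le_add (by simp) (by simp)]

section Penalized

variable {X : Type*} [PseudoMetricSpace X]

noncomputable def penalized (φ : X → EReal) (h : ℝ) (x y : X) : EReal :=
  φ y + ((dist x y ^ 2 / (2 * h) : ℝ) : EReal)

def BoundedSublevelsSeqCompact (φ : X → EReal) : Prop :=
  ∀ x : ℕ → X, (∃ C : ℝ, ∀ m, φ (x m) ≤ (C : EReal)) →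
    (∃ R : ℝ, ∀ m k, dist (x m) (x k) ≤ R) →
    ∃ ψ : ℕ → ℕ, StrictMono ψ ∧ ∃ z : X, Tendsto (x ∘ ψ) atTop (𝓝 z)

variable {φ : X → EReal}

@[simp]
lemma penalized_self (h : ℝ) (x : X) : penalized φ h x x = φ x := by
  simp [penalized]

lemma le_penalized (φ : X → EReal) {h : ℝ} (hh : 0 ≤ h) (x y : X) : φ y ≤ penalized φ h x y :=
  le_add_of_nonneg_right (EReal.coe_nonneg.2 (by positivity))

lemma lowerSemicontinuous_penalized (hφ : LowerSemicontinuous φ) (h : ℝ) (x : X) :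
    LowerSemicontinuous (penalized φ h x) :=
  hφ.add' (continuous_coe_real_ereal.comp (by fun_prop)).lowerSemicontinuous
    fun _ => EReal.continuousAt_add (Or.inr (EReal.coe_ne_bot _)) (Or.inr (EReal.coe_ne_top _))

lemma coe_le_penalized {hstar h m : ℝ} {xstar : X} (hs : 0 < hstar) (hh : 0 < h)
    (hh4 : h ≤ hstar / 4) (hm : ∀ y, (m : EReal) ≤ penalized φ hstar xstar y) (x y : X) :
    ((m - dist xstar x ^ 2 / hstar + dist x y ^ 2 / hstar : ℝ) : EReal) ≤ penalized φ h x y := by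
  have hy := hm y
  rw [penalized, EReal.coe_le_add_coe_iff] at hy ⊢
  refine le_trans (EReal.coe_le_coe_iff.2 ?_) hy
  have htri : dist xstar y ^ 2 ≤ 2 * dist xstar x ^ 2 + 2 * dist x y ^ 2 := by
    nlinarith [dist_triangle xstar x y, dist_nonneg (x := xstar) (y := y),
      sq_nonneg (dist xstar x - dist x y)]
  have hpen : 2 * (dist x y ^ 2 / hstar) ≤ dist x y ^ 2 / (2 * h) := by
    rw [← mul_div_assoc, div_le_div_iff₀ hs (by positivity)]
    nlinarith [sq_nonneg (dist x y)]
  have hquad :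
      dist xstar y ^ 2 / (2 * hstar) ≤ dist xstar x ^ 2 / hstar + dist x y ^ 2 / hstar := by
    rw [← add_div, div_le_div_iff₀ (by positivity) hs]
    nlinarith
  linarith

lemma BoundedSublevelsSeqCompact.isCompact (hφ : BoundedSublevelsSeqCompact φ) {s : Set X}
    (hs : IsClosed s) (hb : Bornology.IsBounded s) {C : ℝ} (hC : ∀ y ∈ s, φ y ≤ C) :
    IsCompact s := by
  refine IsSeqCompact.isCompact fun x hx => ?_
  obtain ⟨R, hR⟩ := isBounded_iff.1 hb
  obtain ⟨ψ, hψ, z, hz⟩ := hφ x ⟨C, fun n => hC _ (hx n)⟩ ⟨R, fun m k => hR (hx m) (hx k)⟩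
  exact ⟨z, hs.mem_of_tendsto hz (Eventually.of_forall fun n => hx _), ψ, hψ, hz⟩

/-- The direct method: the sublevel set of the penalized functional through a point where `φ`
is finite is closed, bounded by coercivity and hence compact. -/
lemma exists_forall_penalized_le (hlsc : LowerSemicontinuous φ)
    (hφ : BoundedSublevelsSeqCompact φ) {hstar h m : ℝ} {xstar : X} (hs : 0 < hstar)
    (hh : 0 < h) (hh4 : h ≤ hstar / 4) (hm : ∀ y, (m : EReal) ≤ penalized φ hstar xstar y)
    (hproper : ∃ x, φ x ≠ ⊤) (x : X) :
    ∃ z, ∀ y, penalized φ h x z ≤ penalized φ h x y := by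
  obtain ⟨x₀, hx₀⟩ := hproper
  set c := penalized φ h x x₀
  have hc : c ≠ ⊤ := EReal.add_ne_top hx₀ (EReal.coe_ne_top _)
  set s := {y | penalized φ h x y ≤ c}
  have hbdd : s ⊆ closedBall x √(hstar * (c.toReal - m + dist xstar x ^ 2 / hstar)) := by
    intro y hy
    have hle := (coe_le_penalized hs hh hh4 hm x y).trans (hy.trans (EReal.le_coe_toReal hc))
    rw [EReal.coe_le_coe_iff] at hle
    rw [mem_closedBall, dist_comm]
    exact Real.le_sqrt_of_sq_le ((div_le_iff₀' hs).1 (by linarith))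
  have hcpt : IsCompact s :=
    hφ.isCompact ((lowerSemicontinuous_penalized hlsc h x).isClosed_preimage c)
      (isBounded_closedBall.subset hbdd)
      fun y hy => (le_penalized φ hh.le x y).trans (hy.trans (EReal.le_coe_toReal hc))
  obtain ⟨z, hzs, hz⟩ := LowerSemicontinuousOn.exists_isMinOn ⟨x₀, le_refl c⟩ hcpt
    ((lowerSemicontinuous_penalized hlsc h x).lowerSemicontinuousOn s)
  refine ⟨z, fun y => ?_⟩
  by_cases hy : y ∈ s
  · exact hz hy
  · exact hzs.trans (not_le.1 hy).le

end Penalized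

section DiscreteEstimates

variable {X : Type*} [PseudoMetricSpace X] {w : ℕ → X} {p : ℕ → ℝ} {h : ℝ}

lemma antitone_of_step (hstep : ∀ k, p (k + 1) + dist (w k) (w (k + 1)) ^ 2 / (2 * h) ≤ p k)
    (hh : 0 < h) : Antitone p :=
  antitone_nat_of_succ_le fun k => by
    have := hstep k
    have : 0 ≤ dist (w k) (w (k + 1)) ^ 2 / (2 * h) := by positivity
    linarith

lemma dist_succ_sq_le_of_step
    (hstep : ∀ k, p (k + 1) + dist (w k) (w (k + 1)) ^ 2 / (2 * h) ≤ p k) (hh : 0 < h) (k : ℕ) :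
    dist (w k) (w (k + 1)) ^ 2 ≤ 2 * h * (p k - p (k + 1)) := by
  rw [← div_le_iff₀' (by positivity)]
  linarith [hstep k]

lemma sum_dist_succ_sq_le_of_step (hstep : ∀ k, p (k + 1) + dist (w k) (w (k + 1)) ^ 2 / (2 * h) ≤ p k)
    (hh : 0 < h) {k l : ℕ} (hkl : k ≤ l) :
    ∑ j ∈ Finset.Ico k l, dist (w j) (w (j + 1)) ^ 2 ≤ 2 * h * (p k - p l) := by
  induction l, hkl using Nat.le_induction with
  | base => simp
  | succ l hkl ih =>
    rw [Finset.sum_Ico_succ_top hkl]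
    linarith [dist_succ_sq_le_of_step hstep hh l]

lemma dist_sq_le_of_step (hstep : ∀ k, p (k + 1) + dist (w k) (w (k + 1)) ^ 2 / (2 * h) ≤ p k)
    (hh : 0 < h) {k l : ℕ} (hkl : k ≤ l) :
    dist (w k) (w l) ^ 2 ≤ 2 * (((l : ℝ) - k) * h) * (p k - p l) := by
  calc dist (w k) (w l) ^ 2 ≤ (∑ j ∈ Finset.Ico k l, dist (w j) (w (j + 1))) ^ 2 :=
        pow_le_pow_left₀ dist_nonneg (dist_le_Ico_sum_dist w hkl) 2
    _ ≤ ((l : ℝ) - k) * ∑ j ∈ Finset.Ico k l, dist (w j) (w (j + 1)) ^ 2 := by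
        simpa [Nat.cast_sub hkl] using sq_sum_le_card_mul_sum_sq (s := Finset.Ico k l)
          (f := fun j => dist (w j) (w (j + 1)))
    _ ≤ ((l : ℝ) - k) * (2 * h * (p k - p l)) :=
        mul_le_mul_of_nonneg_left (sum_dist_succ_sq_le_of_step hstep hh hkl)
          (sub_nonneg.2 (Nat.cast_le.2 hkl))
    _ = _ := by ring

/-- Discrete Gronwall estimate: `F k = d(xstar, w k)² + hstar (p k - m)` dominates
`d(xstar, w k)² / 2` and grows at most by the factor `1 + 8 h / hstar` per step. -/
lemma dist_sq_le_exp_of_step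
    (hstep : ∀ k, p (k + 1) + dist (w k) (w (k + 1)) ^ 2 / (2 * h) ≤ p k)
    {hstar m : ℝ} {xstar : X} (hs : 0 < hstar) (hh : 0 < h) (hh4 : h ≤ hstar / 4)
    (hlow : ∀ k, m - dist xstar (w k) ^ 2 / (2 * hstar) ≤ p k) {T : ℝ} {k : ℕ} (hkT : k * h ≤ T) :
    dist xstar (w k) ^ 2 ≤
      2 * Real.exp (8 * T / hstar) * (dist xstar (w 0) ^ 2 + hstar * (p 0 - m)) := by
  set F : ℕ → ℝ := fun k => dist xstar (w k) ^ 2 + hstar * (p k - m)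
  have hlow' : ∀ k, -(dist xstar (w k) ^ 2 / 2) ≤ hstar * (p k - m) := fun k => by
    have := mul_le_mul_of_nonneg_left (hlow k) hs.le
    have hcancel : hstar * (dist xstar (w k) ^ 2 / (2 * hstar)) = dist xstar (w k) ^ 2 / 2 := by
      field_simp
    linarith [mul_sub hstar m (dist xstar (w k) ^ 2 / (2 * hstar))]
  have hF : ∀ k, dist xstar (w k) ^ 2 ≤ 2 * F k := fun k => by linarith [hlow' k]
  have hstep' : ∀ k, F (k + 1) ≤ (1 + 8 * h / hstar) * F k := fun k => by
    set a := dist xstar (w k)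
    set d := dist (w k) (w (k + 1))
    have hd := dist_succ_sq_le_of_step hstep hh k
    have hΔ : 0 ≤ p k - p (k + 1) := sub_nonneg.2 (antitone_of_step hstep hh k.le_succ)
    -- Young's inequality `2 a d ≤ ε a² + d² / ε` with `ε = 4 h / hstar`
    have hyoung : 2 * a * d ≤ 4 * h / hstar * a ^ 2 + hstar * d ^ 2 / (4 * h) := by
      have : 4 * h / hstar * a ^ 2 + hstar * d ^ 2 / (4 * h) - 2 * a * d =
          (4 * h * a - hstar * d) ^ 2 / (4 * h * hstar) := by
        field_simp
        ring
      linarith [div_nonneg (sq_nonneg (4 * h * a - hstar * d)) (by positivity : 0 ≤ 4 * h * hstar)]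
    have hd' : hstar * d ^ 2 / (4 * h) ≤ hstar * (p k - p (k + 1)) / 2 := by
      rw [div_le_div_iff₀ (by positivity) two_pos]
      nlinarith
    have hsucc : dist xstar (w (k + 1)) ^ 2 ≤ (a + d) ^ 2 :=
      pow_le_pow_left₀ dist_nonneg (dist_triangle _ _ _) 2
    set r := h / hstar
    have hr : 0 ≤ r := by positivity
    have h8 : 8 * h / hstar = 8 * r := by ring
    have h4 : 4 * h / hstar = 4 * r := by ring
    rw [h4] at hyoung
    rw [h8]
    nlinarith [mul_le_mul_of_nonneg_left (hlow' k) hr]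
  have hpow : ∀ k, F k ≤ (1 + 8 * h / hstar) ^ k * F 0 := fun k => by
    induction k with
    | zero => simp
    | succ k ih =>
      calc F (k + 1) ≤ (1 + 8 * h / hstar) * F k := hstep' k
        _ ≤ (1 + 8 * h / hstar) * ((1 + 8 * h / hstar) ^ k * F 0) :=
            mul_le_mul_of_nonneg_left ih (by positivity)
        _ = _ := by ring
  have hexp : (1 + 8 * h / hstar) ^ k ≤ Real.exp (8 * T / hstar) := by
    calc (1 + 8 * h / hstar) ^ k ≤ Real.exp (8 * h / hstar) ^ k :=
          pow_le_pow_left₀ (by positivity) (by linarith [Real.add_one_le_exp (8 * h / hstar)]) k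
      _ = Real.exp (8 * (k * h) / hstar) := by rw [← Real.exp_nat_mul]; ring_nf
      _ ≤ Real.exp (8 * T / hstar) := by gcongr
  have hF0 : 0 ≤ F 0 := by linarith [hF 0, sq_nonneg (dist xstar (w 0))]
  calc dist xstar (w k) ^ 2 ≤ 2 * F k := hF k
    _ ≤ 2 * (Real.exp (8 * T / hstar) * F 0) := by
        gcongr; exact (hpow k).trans (mul_le_mul_of_nonneg_right hexp hF0)
    _ = _ := by ring

lemma sub_le_exp_of_step
    (hstep : ∀ k, p (k + 1) + dist (w k) (w (k + 1)) ^ 2 / (2 * h) ≤ p k)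
    {hstar m : ℝ} {xstar : X} (hs : 0 < hstar) (hh : 0 < h) (hh4 : h ≤ hstar / 4)
    (hlow : ∀ k, m - dist xstar (w k) ^ 2 / (2 * hstar) ≤ p k) {T : ℝ} {l : ℕ} (hlT : l * h ≤ T) :
    p 0 - p l ≤
      p 0 - m + Real.exp (8 * T / hstar) * (dist xstar (w 0) ^ 2 + hstar * (p 0 - m)) / hstar := by
  have hl := dist_sq_le_exp_of_step hstep hs hh hh4 hlow hlT
  have : dist xstar (w l) ^ 2 / (2 * hstar) ≤
      Real.exp (8 * T / hstar) * (dist xstar (w 0) ^ 2 + hstar * (p 0 - m)) / hstar := by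
    rw [div_le_div_iff₀ (by positivity) hs]
    nlinarith
  linarith [hlow l]

lemma natFloor_div_mul_le {t h : ℝ} (ht : 0 ≤ t) (hh : 0 < h) : (⌊t / h⌋₊ : ℝ) * h ≤ t :=
  (le_div_iff₀ hh).1 (Nat.floor_le (div_nonneg ht hh.le))

lemma sub_natFloor_div_mul_le {s t h : ℝ} (ht : 0 ≤ t) (hh : 0 < h) :
    ((⌊t / h⌋₊ : ℝ) - ⌊s / h⌋₊) * h ≤ t - s + h := by
  have hs : s < (⌊s / h⌋₊ + 1) * h := (div_lt_iff₀ hh).1 (Nat.lt_floor_add_one _)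
  linarith [natFloor_div_mul_le ht hh]

lemma dist_natFloor_le_of_step
    (hstep : ∀ k, p (k + 1) + dist (w k) (w (k + 1)) ^ 2 / (2 * h) ≤ p k)
    {hstar m : ℝ} {xstar : X} (hs : 0 < hstar) (hh : 0 < h) (hh4 : h ≤ hstar / 4)
    (hlow : ∀ k, m - dist xstar (w k) ^ 2 / (2 * hstar) ≤ p k) {T s t : ℝ}
    (hsT : s ∈ Icc 0 T) (htT : t ∈ Icc 0 T) :
    dist (w ⌊s / h⌋₊) (w ⌊t / h⌋₊) ≤
      √(2 * (p 0 - m + Real.exp (8 * T / hstar) * (dist xstar (w 0) ^ 2 + hstar * (p 0 - m)) /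
        hstar) * (|t - s| + h)) := by
  wlog hst : s ≤ t generalizing s t with H
  · rw [dist_comm, abs_sub_comm]
    exact H htT hsT (le_of_not_ge hst)
  have hkl : ⌊s / h⌋₊ ≤ ⌊t / h⌋₊ := Nat.floor_mono (by gcongr)
  have hlT : (⌊t / h⌋₊ : ℝ) * h ≤ T := (natFloor_div_mul_le htT.1 hh).trans htT.2
  have hdiss : 0 ≤ p ⌊s / h⌋₊ - p ⌊t / h⌋₊ := sub_nonneg.2 (antitone_of_step hstep hh hkl)
  have htime : 0 ≤ |t - s| + h := by positivity
  refine Real.le_sqrt_of_sq_le ?_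
  calc dist (w ⌊s / h⌋₊) (w ⌊t / h⌋₊) ^ 2
      ≤ 2 * (((⌊t / h⌋₊ : ℝ) - ⌊s / h⌋₊) * h) * (p ⌊s / h⌋₊ - p ⌊t / h⌋₊) :=
        dist_sq_le_of_step hstep hh hkl
    _ ≤ 2 * (|t - s| + h) * (p 0 - p ⌊t / h⌋₊) := by
        rw [abs_of_nonneg (sub_nonneg.2 hst)]
        gcongr
        · exact sub_natFloor_div_mul_le htT.1 hh
        · exact antitone_of_step hstep hh (Nat.zero_le _)
    _ ≤ _ := by
        rw [mul_right_comm]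
        gcongr
        exact sub_le_exp_of_step hstep hs hh hh4 hlow hlT

end DiscreteEstimates

lemma cauchySeq_of_forall_eventually_dist_lt {X : Type*} [PseudoMetricSpace X] {g : ℕ → X}
    (hg : ∀ ε > 0, ∃ y : ℕ → X, CauchySeq y ∧ ∀ᶠ n in atTop, dist (g n) (y n) < ε) :
    CauchySeq g := by
  refine Metric.cauchySeq_iff.2 fun ε hε => ?_
  obtain ⟨y, hy, hgy⟩ := hg (ε / 3) (by positivity)
  obtain ⟨N, hN⟩ := Metric.cauchySeq_iff.1 hy (ε / 3) (by positivity)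
  obtain ⟨N', hN'⟩ := eventually_atTop.1 hgy
  refine ⟨max N N', fun m hm n hn => ?_⟩
  have := hN m (le_of_max_le_left hm) n (le_of_max_le_left hn)
  have := hN' m (le_of_max_le_right hm)
  have := hN' n (le_of_max_le_right hn)
  calc dist (g m) (g n) ≤ dist (g m) (y m) + dist (y m) (y n) + dist (y n) (g n) :=
        dist_triangle4 _ _ _ _
    _ < ε := by rw [dist_comm (y n)]; linarith

lemma exists_strictMono_forall_tendsto {ι X : Type*} [Countable ι] [TopologicalSpace X]
    [FirstCountableTopology X] {K : ι → Set X} (hK : ∀ i, IsCompact (K i)) {f : ℕ → ι → X}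
    (hf : ∀ n i, f n i ∈ K i) :
    ∃ ψ : ℕ → ℕ, StrictMono ψ ∧ ∀ i, ∃ x, Tendsto (fun n => f (ψ n) i) atTop (𝓝 x) := by
  obtain ⟨g, -, ψ, hψ, hlim⟩ :=
    (isCompact_univ_pi hK).tendsto_subseq (x := f) fun n => mem_univ_pi.2 (hf n)
  exact ⟨ψ, hψ, fun i => ⟨g i, tendsto_pi_nhds.1 hlim i⟩⟩

lemma continuousOn_Ici_of_dist_le {X : Type*} [PseudoMetricSpace X] {u : ℝ → X}
    {ω : ℝ → ℝ → ℝ} (hω : ∀ T, Continuous (ω T)) (hω0 : ∀ T, ω T 0 = 0)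
    (hu : ∀ T s t, s ∈ Icc 0 T → t ∈ Icc 0 T → dist (u s) (u t) ≤ ω T |t - s|) :
    ContinuousOn u (Ici 0) := by
  intro t₀ ht₀
  rw [ContinuousWithinAt, tendsto_iff_dist_tendsto_zero]
  have hnear : ∀ᶠ s in 𝓝[Ici 0] t₀, s ∈ Icc 0 (t₀ + 1) :=
    inter_mem self_mem_nhdsWithin (nhdsWithin_le_nhds (Iic_mem_nhds (by linarith)))
  have hlim : Tendsto (fun s => ω (t₀ + 1) |t₀ - s|) (𝓝[Ici 0] t₀) (𝓝 0) := by
    rw [← hω0 (t₀ + 1)]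
    refine ((hω _).tendsto 0).comp (tendsto_nhdsWithin_of_tendsto_nhds ?_)
    have : Tendsto (fun s => |t₀ - s|) (𝓝 t₀) (𝓝 |t₀ - t₀|) :=
      (continuous_const.sub continuous_id).abs.tendsto t₀
    simpa using this
  refine squeeze_zero' (Eventually.of_forall fun _ => dist_nonneg) ?_ hlim
  filter_upwards [hnear] with s hs
  exact hu _ s t₀ hs ⟨ht₀, by linarith⟩

/-- A refined Arzelà–Ascoli theorem: equicontinuity is only required up to errors `h n → 0`. -/
theorem exists_strictMono_tendsto_continuousOn {X : Type*} [PseudoMetricSpace X]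
    {f : ℕ → ℝ → X} {h : ℕ → ℝ} (hh : Tendsto h atTop (𝓝 0)) {K : ℝ → Set X}
    (hK : ∀ t, 0 ≤ t → IsCompact (K t)) (hfK : ∀ n t, 0 ≤ t → f n t ∈ K t)
    {ω : ℝ → ℝ → ℝ} (hω : ∀ T, Continuous (ω T)) (hω0 : ∀ T, ω T 0 = 0)
    (hmod : ∀ n T s t, s ∈ Icc 0 T → t ∈ Icc 0 T → dist (f n s) (f n t) ≤ ω T (|t - s| + h n)) :
    ∃ ψ : ℕ → ℕ, StrictMono ψ ∧ ∃ u : ℝ → X, ContinuousOn u (Ici 0) ∧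
      ∀ t, 0 ≤ t → Tendsto (fun n => f (ψ n) t) atTop (𝓝 (u t)) := by
  obtain ⟨ψ, hψ, hrat⟩ := exists_strictMono_forall_tendsto (ι := ℚ≥0)
    (fun q => hK q q.cast_nonneg) fun n q => hfK n q q.cast_nonneg
  have hωψ : ∀ T r, Tendsto (fun n => ω T (r + h (ψ n))) atTop (𝓝 (ω T r)) := fun T r => by
    have : Tendsto (fun n => ω T (r + h (ψ n))) atTop (𝓝 (ω T (r + 0))) :=
      ((hω T).tendsto _).comp (tendsto_const_nhds.add (hh.comp hψ.tendsto_atTop))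
    simpa using this
  -- at a real time `t`, compare with a rational time `q` slightly larger than `t`
  have hcauchy : ∀ t, 0 ≤ t → CauchySeq fun n => f (ψ n) t := by
    intro t ht
    refine cauchySeq_of_forall_eventually_dist_lt fun ε hε => ?_
    obtain ⟨η, hη, hωη⟩ := Metric.eventually_nhds_iff.1
      (((hω (t + 1)).tendsto 0).eventually (gt_mem_nhds (hω0 (t + 1) ▸ hε)))
    obtain ⟨q, htq, hqt⟩ := exists_rat_btwn (lt_add_of_pos_right t (lt_min one_pos hη))
    have hq : (0 : ℝ) ≤ q := ht.trans htq.le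
    obtain ⟨x, hx⟩ := hrat ⟨q, Rat.cast_nonneg.1 hq⟩
    refine ⟨fun n => f (ψ n) q, hx.cauchySeq, ?_⟩
    have hqt' : |(q : ℝ) - t| < η := by
      rw [abs_of_pos (sub_pos.2 htq)]; linarith [min_le_right 1 η]
    filter_upwards [(hωψ (t + 1) |(q : ℝ) - t|).eventually
      (gt_mem_nhds (hωη (by simpa using hqt')))] with n hn
    refine (hmod (ψ n) (t + 1) t q ⟨ht, by linarith⟩ ⟨hq, ?_⟩).trans_lt hn
    linarith [min_le_left 1 η]
  have hlim : ∀ t, 0 ≤ t → ∃ x, Tendsto (fun n => f (ψ n) t) atTop (𝓝 x) := fun t ht =>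
    let ⟨x, _, hx⟩ := cauchySeq_tendsto_of_isComplete (hK t ht).isComplete
      (fun n => hfK (ψ n) t ht) (hcauchy t ht)
    ⟨x, hx⟩
  have : Nonempty X := ⟨f 0 0⟩
  set u : ℝ → X := fun t => limUnder atTop fun n => f (ψ n) t
  have hu : ∀ t, 0 ≤ t → Tendsto (fun n => f (ψ n) t) atTop (𝓝 (u t)) := fun t ht =>
    tendsto_nhds_limUnder (hlim t ht)
  refine ⟨ψ, hψ, u, continuousOn_Ici_of_dist_le hω hω0 fun T s t hs ht => ?_, hu⟩
  refine le_of_tendsto_of_tendsto' ((hu s hs.1).dist (hu t ht.1)) ?_ fun n => hmod _ T s t hs ht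
  exact hωψ T _

section MinimizingMovement

variable {X : Type*} [PseudoMetricSpace X] {φ : X → EReal} {h : ℝ} {w : ℕ → X}

def IsMinimizingMovement (φ : X → EReal) (h : ℝ) (w : ℕ → X) : Prop :=
  ∀ k y, penalized φ h (w k) (w (k + 1)) ≤ penalized φ h (w k) y

lemma exists_isMinimizingMovement (hmin : ∀ x, ∃ z, ∀ y, penalized φ h x z ≤ penalized φ h x y)
    (x₀ : X) : ∃ w, w 0 = x₀ ∧ IsMinimizingMovement φ h w := by
  choose F hF using hmin
  exact ⟨fun k => F^[k] x₀, rfl, fun k y => by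
    simpa only [Function.iterate_succ_apply'] using hF _ y⟩

lemma sub_le_toReal_of_coe_le_penalized {hstar m : ℝ} {xstar : X}
    (hm : ∀ y, (m : EReal) ≤ penalized φ hstar xstar y) (hbot : ∀ x, φ x ≠ ⊥) {y : X}
    (hy : φ y ≠ ⊤) : m - dist xstar y ^ 2 / (2 * hstar) ≤ (φ y).toReal := by
  have := hm y
  rwa [penalized, EReal.coe_le_add_coe_iff, ← EReal.coe_toReal hy (hbot y),
    EReal.coe_le_coe_iff] at this

namespace IsMinimizingMovement

lemma antitone (hw : IsMinimizingMovement φ h w) (hh : 0 ≤ h) : Antitone (φ ∘ w) :=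
  antitone_nat_of_succ_le fun k => by
    simpa using (le_penalized φ hh _ _).trans (hw k (w k))

lemma ne_top (hw : IsMinimizingMovement φ h w) (hh : 0 ≤ h) (h0 : φ (w 0) ≠ ⊤) (k : ℕ) :
    φ (w k) ≠ ⊤ :=
  ne_top_of_le_ne_top h0 (hw.antitone hh (Nat.zero_le k))

lemma toReal_step (hw : IsMinimizingMovement φ h w) (hh : 0 ≤ h) (hbot : ∀ x, φ x ≠ ⊥)
    (h0 : φ (w 0) ≠ ⊤) (k : ℕ) :
    (φ (w (k + 1))).toReal + dist (w k) (w (k + 1)) ^ 2 / (2 * h) ≤ (φ (w k)).toReal := by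
  have := hw k (w k)
  rwa [penalized_self, penalized, ← EReal.coe_toReal (hw.ne_top hh h0 (k + 1)) (hbot _),
    ← EReal.coe_toReal (hw.ne_top hh h0 k) (hbot _), ← EReal.coe_add, EReal.coe_le_coe_iff] at this

end IsMinimizingMovement

theorem exists_uniform_estimates (hlsc : LowerSemicontinuous φ) (hφ : BoundedSublevelsSeqCompact φ)
    (hbot : ∀ x, φ x ≠ ⊥) {hstar m : ℝ} {xstar : X} (hs : 0 < hstar)
    (hm : ∀ y, (m : EReal) ≤ penalized φ hstar xstar y) {x₀ : X} (h0 : φ x₀ ≠ ⊤) :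
    ∃ (K : ℝ → Set X) (ω : ℝ → ℝ → ℝ), (∀ t, IsCompact (K t)) ∧ (∀ T, Continuous (ω T)) ∧
      (∀ T, ω T 0 = 0) ∧ ∀ (h : ℝ) (w : ℕ → X), 0 < h → h ≤ hstar / 4 → w 0 = x₀ →
        IsMinimizingMovement φ h w → (∀ t, 0 ≤ t → w ⌊t / h⌋₊ ∈ K t) ∧
          ∀ T s t, s ∈ Icc 0 T → t ∈ Icc 0 T →
            dist (w ⌊s / h⌋₊) (w ⌊t / h⌋₊) ≤ ω T (|t - s| + h) := by
  set S := (φ x₀).toReal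
  set F₀ := dist xstar x₀ ^ 2 + hstar * (S - m)
  refine ⟨fun t => {y | φ y ≤ S} ∩ closedBall xstar √(2 * Real.exp (8 * t / hstar) * F₀),
    fun T r => √(2 * (S - m + Real.exp (8 * T / hstar) * F₀ / hstar) * r),
    fun t => hφ.isCompact ((hlsc.isClosed_preimage _).inter isClosed_closedBall)
      (isBounded_closedBall.subset inter_subset_right) fun y hy => hy.1,
    fun T => by fun_prop, fun T => by simp, ?_⟩
  rintro h w hh hh4 rfl hw
  have hstep := hw.toReal_step hh.le hbot h0
  have hlow := fun k => sub_le_toReal_of_coe_le_penalized hm hbot (hw.ne_top hh.le h0 k)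
  refine ⟨fun t ht => ⟨(hw.antitone hh.le (Nat.zero_le _)).trans (EReal.le_coe_toReal h0), ?_⟩,
    fun T s t hsT htT => dist_natFloor_le_of_step hstep hs hh hh4 hlow hsT htT⟩
  rw [mem_closedBall, dist_comm]
  exact Real.le_sqrt_of_sq_le (dist_sq_le_exp_of_step hstep hs hh hh4 hlow
    (natFloor_div_mul_le ht hh))

end MinimizingMovement

theorem gmm_exists_metric_general
    {X : Type*} [MetricSpace X]
    (φ : X → EReal) (hbot : ∀ x, φ x ≠ ⊥)
    (hlsc : LowerSemicontinuous φ)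
    (hbdd : ∃ (hstar : ℝ) (xstar : X), 0 < hstar ∧ ∃ m : ℝ, ∀ y : X,
      (m : EReal) ≤ φ y + ((dist xstar y ^ 2 / (2 * hstar) : ℝ) : EReal))
    (hcpt : ∀ x : ℕ → X, (∃ C : ℝ, ∀ m, φ (x m) ≤ (C : EReal)) →
      (∃ R : ℝ, ∀ m k, dist (x m) (x k) ≤ R) →
      ∃ ψ : ℕ → ℕ, StrictMono ψ ∧ ∃ z : X, Tendsto (x ∘ ψ) atTop (nhds z))
    (u₀ : X) (hu₀ : φ u₀ ≠ ⊤) :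
    ∃ (h : ℕ → ℝ) (w : ℕ → ℕ → X) (u : ℝ → X),
      (∀ m, 0 < h m) ∧ Tendsto h atTop (nhds 0) ∧
      (∀ m, w m 0 = u₀) ∧
      (∀ m k, ∀ y : X,
        φ (w m (k + 1)) + ((dist (w m k) (w m (k + 1)) ^ 2 / (2 * h m) : ℝ) : EReal) ≤
          φ y + ((dist (w m k) y ^ 2 / (2 * h m) : ℝ) : EReal)) ∧
      ContinuousOn u (Set.Ici 0) ∧ u 0 = u₀ ∧
      (∀ t : ℝ, 0 ≤ t →
        Tendsto (fun m => dist (w m ⌊t / h m⌋₊) (u t)) atTop (nhds 0)) := by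
  obtain ⟨hstar, xstar, hs, m, hm⟩ := hbdd
  obtain ⟨K, ω, hK, hω, hω0, hest⟩ := exists_uniform_estimates hlsc hcpt hbot hs hm hu₀
  set h : ℕ → ℝ := fun n => hstar / 4 / (n + 1)
  have hpos : ∀ n, 0 < h n := fun n => by positivity
  have hle : ∀ n, h n ≤ hstar / 4 := fun n => div_le_self (by positivity) (by simp)
  have htend : Tendsto h atTop (𝓝 0) := by
    simpa [h, div_eq_mul_one_div (hstar / 4)] using
      tendsto_one_div_add_atTop_nhds_zero_nat.const_mul (hstar / 4)
  choose w hw0 hw using fun n => exists_isMinimizingMovement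
    (exists_forall_penalized_le hlsc hcpt hs (hpos n) (hle n) hm ⟨u₀, hu₀⟩) u₀
  obtain ⟨ψ, hψ, u, hu, hlim⟩ := exists_strictMono_tendsto_continuousOn
    (f := fun n t => w n ⌊t / h n⌋₊) htend (fun t _ => hK t)
    (fun n => (hest _ _ (hpos n) (hle n) (hw0 n) (hw n)).1) hω hω0
    (fun n => (hest _ _ (hpos n) (hle n) (hw0 n) (hw n)).2)
  refine ⟨h ∘ ψ, w ∘ ψ, u, fun n => hpos _, htend.comp hψ.tendsto_atTop, fun n => hw0 _,
    fun n => hw (ψ n), hu, tendsto_nhds_unique (hlim 0 le_rfl) ?_,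
    fun t ht => tendsto_iff_dist_tendsto_zero.1 (hlim t ht)⟩
  simp [hw0]

/-- Existence of generalized minimizing movements in complete metric spaces: under
lower semicontinuity, boundedness-below of a penalized functional and a compactness
assumption, the implicit Euler scheme admits a subsequence converging pointwise to a
continuous curve starting at `u₀`. -/
theorem gmm_exists_metric
    {X : Type*} [MetricSpace X] [CompleteSpace X]
    (φ : X → EReal) (hproper : ∃ x, φ x ≠ ⊤) (hbot : ∀ x, φ x ≠ ⊥)
    (hlsc : LowerSemicontinuous φ)
    (hbdd : ∃ (hstar : ℝ) (xstar : X), 0 < hstar ∧ ∃ m : ℝ, ∀ y : X,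
      (m : EReal) ≤ φ y + ((dist xstar y ^ 2 / (2 * hstar) : ℝ) : EReal))
    (hcpt : ∀ x : ℕ → X, (∃ C : ℝ, ∀ m, φ (x m) ≤ (C : EReal)) →
      (∃ R : ℝ, ∀ m k, dist (x m) (x k) ≤ R) →
      ∃ ψ : ℕ → ℕ, StrictMono ψ ∧ ∃ z : X, Tendsto (x ∘ ψ) atTop (nhds z))
    (u₀ : X) (hu₀ : φ u₀ ≠ ⊤) :
    ∃ (h : ℕ → ℝ) (w : ℕ → ℕ → X) (u : ℝ → X),
      (∀ m, 0 < h m) ∧ Tendsto h atTop (nhds 0) ∧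
      (∀ m, w m 0 = u₀) ∧
      (∀ m k, ∀ y : X,
        φ (w m (k + 1)) + ((dist (w m k) (w m (k + 1)) ^ 2 / (2 * h m) : ℝ) : EReal) ≤
          φ y + ((dist (w m k) y ^ 2 / (2 * h m) : ℝ) : EReal)) ∧
      ContinuousOn u (Set.Ici 0) ∧ u 0 = u₀ ∧
      (∀ t : ℝ, 0 ≤ t →
        Tendsto (fun m => dist (w m ⌊t / h m⌋₊) (u t)) atTop (nhds 0)) :=
  gmm_exists_metric_general φ hbot hlsc hbdd hcpt u₀ hu₀
end
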